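/- arXiv:1906.08812 — 2 statements merged into one kernel-verified Lean document; each statement's English description precedes it below -/
import Mathlib

section
/- Let r₁, r₂ ∈ (0,1), let α₁, β₁ be positive integers, and let F(x; α, β) denote the Beta CDF with integer parameters. Define p(α₁, β₁) = 1 − F(r₂; α₁, β₁). Then the inequality r₁ · p(α₁+1, β₁) + (1−r₁) · p(α₁, β₁+1) > p(α₁, β₁) holds if and only if α₁/(α₁+β₁) < r₁. -/
open Finset

/-- Beta CDF with positive integer parameters `α β`, evaluated at `x`:
`F(x; α, β) = ∑_{k=α}^{α+β−1} C(α+β−1, k) x^k (1−x)^(α+β−1−k)`. -/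
noncomputable def betaCDF (x : ℝ) (α β : ℕ) : ℝ :=
  ∑ k ∈ Finset.Icc α (α + β - 1),
    ((α + β - 1).choose k : ℝ) * x ^ k * (1 - x) ^ (α + β - 1 - k)

/-- Binomial tail sum `∑_{j=k}^{n} C(n,j) x^j (1-x)^(n-j)`. -/
noncomputable def binTail (x : ℝ) (n k : ℕ) : ℝ :=
  ∑ j ∈ Finset.Icc k n, (n.choose j : ℝ) * x ^ j * (1 - x) ^ (n - j)

lemma betaCDF_eq_binTail (x : ℝ) (α β : ℕ) : betaCDF x α β = binTail x (α + β - 1) α := rfl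

lemma binTail_top (x : ℝ) (n k : ℕ) (h : k ≤ n) :
    binTail x n k = (n.choose k : ℝ) * x ^ k * (1 - x) ^ (n - k) + binTail x n (k + 1) := by
  unfold binTail
  rw [Finset.Icc_eq_cons_Ioc h, Finset.sum_cons, Finset.Icc_add_one_left_eq_Ioc]

lemma binTail_pascal (x : ℝ) (n k : ℕ) (hk : k ≤ n) :
    binTail x (n + 1) (k + 1) = x * binTail x n k + (1 - x) * binTail x n (k + 1) := by
  have hmap : ∀ m : ℕ, ∀ f : ℕ → ℝ,
      ∑ j ∈ Finset.Icc (k + 1) (m + 1), f j = ∑ i ∈ Finset.Icc k m, f (i + 1) := by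
    intro m f
    rw [← Finset.map_add_right_Icc k m 1, Finset.sum_map]
    rfl
  unfold binTail
  rw [hmap]
  have h2 : ∑ i ∈ Finset.Icc k n, (n.choose (i + 1) : ℝ) * x ^ (i + 1) * (1 - x) ^ (n - i)
      = (1 - x) * ∑ j ∈ Finset.Icc (k + 1) n, (n.choose j : ℝ) * x ^ j * (1 - x) ^ (n - j) := by
    rw [Finset.mul_sum]
    have hre := hmap n (fun j => (n.choose j : ℝ) * x ^ j * (1 - x) ^ (n + 1 - j))
    simp only [Nat.succ_sub_succ] at hre
    rw [← hre]
    rw [Finset.sum_Icc_succ_top (by omega : k + 1 ≤ n + 1)]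
    simp only [Nat.choose_succ_self, Nat.cast_zero, zero_mul, add_zero]
    apply Finset.sum_congr rfl
    intro j hj
    have hjn : j ≤ n := (Finset.mem_Icc.mp hj).2
    rw [show n + 1 - j = (n - j) + 1 by omega]
    ring
  calc ∑ i ∈ Finset.Icc k n, ((n + 1).choose (i + 1) : ℝ) * x ^ (i + 1) * (1 - x) ^ (n + 1 - (i + 1))
      = ∑ i ∈ Finset.Icc k n, (x * ((n.choose i : ℝ) * x ^ i * (1 - x) ^ (n - i))
          + (n.choose (i + 1) : ℝ) * x ^ (i + 1) * (1 - x) ^ (n - i)) := by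
        apply Finset.sum_congr rfl
        intro i _
        rw [Nat.choose_succ_succ, Nat.succ_sub_succ]
        push_cast
        ring
    _ = x * binTail x n k + (1 - x) * binTail x n (k + 1) := by
        rw [Finset.sum_add_distrib, ← Finset.mul_sum, h2]
        rfl

/-- Instantaneously self-correcting property of the Bayesian learning automaton:
with `p(α₁,β₁) = 1 − F(r₂; α₁, β₁)`, the expected posterior probability of
choosing arm 1 strictly increases after one Bernoulli(r₁) update iff
`α₁/(α₁+β₁) < r₁`. -/
theorem bla_self_correcting (r₁ r₂ : ℝ) (hr₁ : r₁ ∈ Set.Ioo (0:ℝ) 1)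
    (hr₂ : r₂ ∈ Set.Ioo (0:ℝ) 1) (α₁ β₁ : ℕ) (hα : 0 < α₁) (hβ : 0 < β₁) :
    (r₁ * (1 - betaCDF r₂ (α₁ + 1) β₁) + (1 - r₁) * (1 - betaCDF r₂ α₁ (β₁ + 1))
        > 1 - betaCDF r₂ α₁ β₁) ↔
      (α₁ : ℝ) / ((α₁ : ℝ) + (β₁ : ℝ)) < r₁ := by
  obtain ⟨a, rfl⟩ : ∃ a, α₁ = a + 1 := ⟨α₁ - 1, by omega⟩
  obtain ⟨b, rfl⟩ : ∃ b, β₁ = b + 1 := ⟨β₁ - 1, by omega⟩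
  obtain ⟨hx0, hx1⟩ := hr₂
  set x := r₂
  set m := a + b + 1 with hm
  -- identify the three betaCDF values
  have hS : betaCDF x (a + 1) (b + 1) = binTail x m (a + 1) := by
    rw [betaCDF_eq_binTail]; congr 1; omega
  have hA : betaCDF x (a + 1 + 1) (b + 1) = binTail x (m + 1) (a + 2) := by
    rw [betaCDF_eq_binTail]; congr 1; omega
  have hB : betaCDF x (a + 1) (b + 1 + 1) = binTail x (m + 1) (a + 1) := by
    rw [betaCDF_eq_binTail]; congr 1; omega
  rw [hS, hA, hB]
  set S := binTail x m (a + 1) with hSdef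
  set A := binTail x (m + 1) (a + 2) with hAdef
  set B := binTail x (m + 1) (a + 1) with hBdef
  have key1 : B = x * binTail x m a + (1 - x) * S := binTail_pascal x m a (by omega)
  have key2 : B = ((m + 1).choose (a + 1) : ℝ) * x ^ (a + 1) * (1 - x) ^ (b + 1) + A := by
    have := binTail_top x (m + 1) (a + 1) (by omega)
    rwa [show m + 1 - (a + 1) = b + 1 by omega] at this
  have key3 : binTail x m a = (m.choose a : ℝ) * x ^ a * (1 - x) ^ (b + 1) + S := by
    have := binTail_top x m a (by omega)
    rwa [show m - a = b + 1 by omega] at this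
  set c0 : ℝ := (m.choose a : ℝ) with hc0
  set c1 : ℝ := ((m + 1).choose (a + 1) : ℝ) with hc1
  have E : r₁ * (1 - A) + (1 - r₁) * (1 - B) - (1 - S)
      = x ^ (a + 1) * (1 - x) ^ (b + 1) * (r₁ * c1 - c0) := by
    linear_combination r₁ * key2 - key1 - x * key3
  have hXpos : 0 < x ^ (a + 1) * (1 - x) ^ (b + 1) :=
    mul_pos (pow_pos hx0 _) (pow_pos (by linarith) _)
  have hc1pos : (0 : ℝ) < c1 := by
    rw [hc1]
    exact_mod_cast Nat.choose_pos (by omega : a + 1 ≤ m + 1)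
  have hrel : ((m : ℝ) + 1) * c0 = c1 * ((a : ℝ) + 1) := by
    rw [hc0, hc1]
    exact_mod_cast Nat.add_one_mul_choose_eq m a
  clear_value S A B c0 c1
  rw [gt_iff_lt, ← sub_pos, E]
  push_cast
  rw [div_lt_iff₀ (by positivity : (0:ℝ) < ((a:ℝ)+1) + ((b:ℝ)+1))]
  have hrel' : ((a:ℝ)+(b:ℝ)+2) * c0 = c1 * ((a:ℝ)+1) := by
    rw [show ((a:ℝ)+(b:ℝ)+2) = (m:ℝ)+1 from by rw [hm]; push_cast; ring]
    exact hrel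
  have hD : (0:ℝ) < (a:ℝ)+(b:ℝ)+2 := by positivity
  constructor
  · intro h
    have h' : 0 < r₁ * c1 - c0 := by
      by_contra hcon
      push_neg at hcon
      nlinarith
    have h2 : c1 * ((a:ℝ)+1) < c1 * (r₁ * ((a:ℝ)+(b:ℝ)+2)) := by
      nlinarith [mul_pos hD h']
    have := (mul_lt_mul_iff_right₀ hc1pos).mp h2
    linarith
  · intro h
    have h3 : 0 < r₁ * ((a:ℝ)+(b:ℝ)+2) - ((a:ℝ)+1) := by linarith
    have h' : c0 < r₁ * c1 := by
      nlinarith [mul_pos hc1pos h3]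
    exact mul_pos hXpos (by linarith)
end

section
/- Let X₁ ~ Beta(α₁, β₁) and X₂ ~ Beta(α₂, β₂) be independent with positive integer parameters. Then P(X₁ > X₂) = ∑_{i=0}^{α₁−1} B(α₂+i, β₁+β₂) / ((β₁+i) B(1+i, β₁) B(α₂, β₂)), where B denotes the Beta function. -/
open MeasureTheory Real

/-- The Beta function `B(a,b) = Γ(a)Γ(b)/Γ(a+b)` at natural-number arguments. -/
noncomputable def betaFun (a b : ℕ) : ℝ :=
  Real.Gamma a * Real.Gamma b / Real.Gamma (a + b)

/-- Density of a Beta(a, b) random variable with positive integer parameters. -/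
noncomputable def betaDensity (a b : ℕ) (x : ℝ) : ℝ :=
  x ^ (a - 1) * (1 - x) ^ (b - 1) / betaFun a b

/-!
Write `f_{a,b}` for the Beta density and `F` for the distribution function of `X₂`. The
difference `f_{n+1,β} - f_{n,β}` is the derivative of `-xⁿ(1-x)^β / ((β+n) B(n+1,β))`, which
vanishes at `x = 1`; integrating it by parts against `F` turns `∫ (f_{n+1,β} - f_{n,β}) F` into
the moment `∫ f_{α₂,β₂}(x) xⁿ(1-x)^β dx / ((β+n) B(n+1,β))`, which is the `n`-th summand.
Summing over `n < α₁` telescopes, since `f_{0,β} = 0`.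
-/

open scoped Nat

lemma betaFun_succ_succ (a b : ℕ) :
    betaFun (a + 1) (b + 1) = a ! * b ! / (a + b + 1)! := by
  simp only [betaFun, Nat.cast_add, Nat.cast_one]
  rw [show (a : ℝ) + 1 + (b + 1) = ((a + b + 1 : ℕ) : ℝ) + 1 by push_cast; ring]
  simp only [Real.Gamma_nat_eq_factorial]

-- Mathlib's `Γ(0) = 0` makes `B(0, b) = 0`, hence this density vanishes.
lemma betaDensity_zero_left (b : ℕ) : betaDensity 0 b = 0 := by
  ext x
  simp [betaDensity, betaFun]

lemma continuous_betaDensity (a b : ℕ) : Continuous (betaDensity a b) := by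
  unfold betaDensity
  fun_prop

lemma integral_pow_mul_one_sub_pow (m n : ℕ) :
    ∫ x in (0 : ℝ)..1, x ^ m * (1 - x) ^ n = betaFun (m + 1) (n + 1) := by
  have h := ProbabilityTheory.beta_eq_betaIntegralReal (m + 1) (n + 1) (by positivity)
    (by positivity)
  rw [show betaFun (m + 1) (n + 1) = ProbabilityTheory.beta (m + 1) (n + 1) by
      simp [betaFun, ProbabilityTheory.beta], h, Complex.betaIntegral]
  push_cast
  simp only [add_sub_cancel_right, Complex.cpow_natCast]
  norm_cast
  rw [intervalIntegral.integral_ofReal, Complex.ofReal_re]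

lemma integral_betaDensity_mul_pow_mul_one_sub_pow {a b : ℕ} (ha : 0 < a) (hb : 0 < b)
    (m n : ℕ) :
    ∫ x in (0 : ℝ)..1, betaDensity a b x * (x ^ m * (1 - x) ^ n)
      = betaFun (a + m) (b + n) / betaFun a b := by
  have h (x : ℝ) : betaDensity a b x * (x ^ m * (1 - x) ^ n)
      = x ^ (a - 1 + m) * (1 - x) ^ (b - 1 + n) / betaFun a b := by
    rw [betaDensity, pow_add, pow_add]
    ring
  simp only [h, intervalIntegral.integral_div, integral_pow_mul_one_sub_pow]
  congr 2 <;> omega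

lemma hasDerivAt_betaDensity_succ_sub (n : ℕ) {β : ℕ} (hβ : 0 < β) (x : ℝ) :
    HasDerivAt (fun y ↦ -(y ^ n * (1 - y) ^ β) / ((β + n) * betaFun (1 + n) β))
      (betaDensity (n + 1) β x - betaDensity n β x) x := by
  obtain ⟨b, rfl⟩ := Nat.exists_eq_add_one.mpr hβ
  refine (((hasDerivAt_pow n x).fun_mul
    (((hasDerivAt_id' x).const_sub 1).fun_pow (b + 1))).fun_neg.div_const _).congr_deriv ?_
  rcases n with _ | m
  · rw [betaDensity_zero_left, Pi.zero_apply, sub_zero, betaDensity, betaFun_succ_succ,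
      Nat.factorial_succ]
    push_cast
    field_simp
    ring
  · simp only [betaDensity, Nat.add_sub_cancel, add_comm 1 (m + 1), betaFun_succ_succ,
      show m + 1 + b = m + b + 1 by omega, Nat.factorial_succ (m + b + 1), Nat.factorial_succ m]
    push_cast
    field_simp
    ring

lemma integral_betaDensity_succ_sub_mul_integral (n : ℕ) {β α₂ β₂ : ℕ} (hβ : 0 < β)
    (hα₂ : 0 < α₂) (hβ₂ : 0 < β₂) :
    ∫ x in (0 : ℝ)..1,
        (betaDensity (n + 1) β x - betaDensity n β x) * ∫ y in (0 : ℝ)..x, betaDensity α₂ β₂ y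
      = betaFun (α₂ + n) (β + β₂) / ((β + n) * betaFun (1 + n) β * betaFun α₂ β₂) := by
  have hf := continuous_betaDensity α₂ β₂
  have parts := intervalIntegral.integral_mul_deriv_eq_deriv_mul
    (fun x _ ↦ hasDerivAt_betaDensity_succ_sub n hβ x)
    (fun x _ ↦ (hf.integral_hasStrictDerivAt 0 x).hasDerivAt)
    (((continuous_betaDensity _ _).sub (continuous_betaDensity _ _)).intervalIntegrable 0 1)
    (hf.intervalIntegrable 0 1)
  have moment : ∫ x in (0 : ℝ)..1,
        -(x ^ n * (1 - x) ^ β) / ((β + n) * betaFun (1 + n) β) * betaDensity α₂ β₂ x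
      = -(betaFun (α₂ + n) (β₂ + β) / betaFun α₂ β₂) / ((β + n) * betaFun (1 + n) β) := by
    rw [← integral_betaDensity_mul_pow_mul_one_sub_pow hα₂ hβ₂, ← intervalIntegral.integral_neg,
      ← intervalIntegral.integral_div]
    congr 1
    ext x
    ring
  rw [moment, intervalIntegral.integral_same, sub_self, zero_pow hβ.ne'] at parts
  rw [add_comm β β₂, ← div_div]
  linear_combination parts

theorem prob_beta_gt_beta_general (α₁ β₁ α₂ β₂ : ℕ)
    (hβ₁ : 0 < β₁) (hα₂ : 0 < α₂) (hβ₂ : 0 < β₂) :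
    (∫ x in (0:ℝ)..1, betaDensity α₁ β₁ x * ∫ y in (0:ℝ)..x, betaDensity α₂ β₂ y)
      = ∑ i ∈ Finset.range α₁,
          betaFun (α₂ + i) (β₁ + β₂) /
            (((β₁ : ℝ) + i) * betaFun (1 + i) β₁ * betaFun α₂ β₂) := by
  have hF : Continuous fun x ↦ ∫ y in (0 : ℝ)..x, betaDensity α₂ β₂ y :=
    intervalIntegral.continuous_primitive
      (fun _ _ ↦ (continuous_betaDensity α₂ β₂).intervalIntegrable _ _) 0
  have hint (a b : ℕ) : IntervalIntegrable
      (fun x ↦ betaDensity a b x * ∫ y in (0 : ℝ)..x, betaDensity α₂ β₂ y) volume 0 1 :=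
    ((continuous_betaDensity a b).mul hF).intervalIntegrable 0 1
  induction α₁ with
  | zero => simp [betaDensity_zero_left]
  | succ n ih =>
    have step := integral_betaDensity_succ_sub_mul_integral n hβ₁ hα₂ hβ₂
    simp_rw [sub_mul] at step
    rw [intervalIntegral.integral_sub (hint _ _) (hint _ _)] at step
    rw [Finset.sum_range_succ, ← ih, ← step]
    ring

/-- Closed form for `P(X₁ > X₂)` for independent Beta random variables with
positive integer parameters (Eq. (30) of the paper). -/
theorem prob_beta_gt_beta (α₁ β₁ α₂ β₂ : ℕ)
    (hα₁ : 0 < α₁) (hβ₁ : 0 < β₁) (hα₂ : 0 < α₂) (hβ₂ : 0 < β₂) :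
    (∫ x in (0:ℝ)..1, betaDensity α₁ β₁ x * ∫ y in (0:ℝ)..x, betaDensity α₂ β₂ y)
      = ∑ i ∈ Finset.range α₁,
          betaFun (α₂ + i) (β₁ + β₂) /
            (((β₁ : ℝ) + i) * betaFun (1 + i) β₁ * betaFun α₂ β₂) :=
  prob_beta_gt_beta_general α₁ β₁ α₂ β₂ hβ₁ hα₂ hβ₂
end
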